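/- In the NP-hardness reduction instance I' (obtained from an SMTI instance I by adding vertices z_i, z_i' with preferences z_i: u_i ≻ z_i', z_i': z_i, and prepending z_i to each u_i's list), if M' is a weakly popular matching in I' of size 2n − l, then I admits a weakly stable matching of size at least n − l. -/

import Mathlib

open Finset
open scoped Classical
noncomputable section

/-- A bipartite preference instance: bipartite (multi)graph `G=(U,W;E)` where each
edge `e` has endpoints `src e ∈ U`, `dst e ∈ W`, and every vertex has a preference
valuation over edges (only values on incident edges are relevant); the valuation of
being unmatched (`∅`) is `0`. -/
structure PrefInst (U W E : Type) where
  src : E → U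
  dst : E → W
  pU : U → E → ℝ
  pW : W → E → ℝ

namespace PrefInst

variable {U W E : Type} [DecidableEq U] [DecidableEq W] [DecidableEq E]

/-- `M` is a matching: no two distinct edges of `M` share an endpoint. -/
def IsMatching (I : PrefInst U W E) (M : Finset E) : Prop :=
  ∀ e ∈ M, ∀ f ∈ M, e ≠ f → I.src e ≠ I.src f ∧ I.dst e ≠ I.dst f

/-- The edge of `M` incident to `u ∈ U` (if any): `M(u)`. -/
def mU (I : PrefInst U W E) (M : Finset E) (u : U) : Option E :=
  (M.filter fun e => I.src e = u).toList.head?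

/-- The edge of `M` incident to `w ∈ W` (if any): `M(w)`. -/
def mW (I : PrefInst U W E) (M : Finset E) (w : W) : Option E :=
  (M.filter fun e => I.dst e = w).toList.head?

/-- Valuation by `u` of a possible partner edge, with `p_u(∅) = 0`. -/
def valU (I : PrefInst U W E) (u : U) : Option E → ℝ
  | none => 0
  | some e => I.pU u e

def valW (I : PrefInst U W E) (w : W) : Option E → ℝ
  | none => 0
  | some e => I.pW w e

/-- `M` is maximal: no edge can be added keeping it a matching. -/
def Maximal (I : PrefInst U W E) (M : Finset E) : Prop :=
  ∀ e ∉ M, ¬ I.IsMatching (insert e M)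

/-- Edge `e ∉ M` blocks `M` in the weak-stability sense: both endpoints strictly improve. -/
def Blocks (I : PrefInst U W E) (M : Finset E) (e : E) : Prop :=
  e ∉ M ∧ I.valU (I.src e) (I.mU M (I.src e)) < I.pU (I.src e) e ∧
    I.valW (I.dst e) (I.mW M (I.dst e)) < I.pW (I.dst e) e

/-- Weak stability: no blocking edge. -/
def WeaklyStable (I : PrefInst U W E) (M : Finset E) : Prop :=
  ∀ e, ¬ I.Blocks M e

/-- Edge `e ∉ M` γ-min blocks `M`: both endpoints improve by at least their γ-threshold. -/
def GBlocks (I : PrefInst U W E) (γU γW : E → ℝ) (M : Finset E) (e : E) : Prop :=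
  e ∉ M ∧ I.valU (I.src e) (I.mU M (I.src e)) + γU e ≤ I.pU (I.src e) e ∧
    I.valW (I.dst e) (I.mW M (I.dst e)) + γW e ≤ I.pW (I.dst e) e

/-- γ-min stability: no γ-min blocking edge. -/
def GMinStable (I : PrefInst U W E) (γU γW : E → ℝ) (M : Finset E) : Prop :=
  ∀ e, ¬ I.GBlocks γU γW M e

/-- Standard vote of `u` comparing `M` to `N`: `+1` if strictly better in `M`,
`-1` if strictly better in `N`, `0` on equal value. -/
def sVoteU (I : PrefInst U W E) (M N : Finset E) (u : U) : ℤ :=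
  if I.valU u (I.mU M u) = I.valU u (I.mU N u) then 0
  else if I.valU u (I.mU M u) < I.valU u (I.mU N u) then -1 else 1

def sVoteW (I : PrefInst U W E) (M N : Finset E) (w : W) : ℤ :=
  if I.valW w (I.mW M w) = I.valW w (I.mW N w) then 0
  else if I.valW w (I.mW M w) < I.valW w (I.mW N w) then -1 else 1

/-- Weak vote of `u`: `0` if same partner, `-1` on strict improvement in `N`,
`+1` otherwise (partner changed without strict improvement). -/
def wVoteU (I : PrefInst U W E) (M N : Finset E) (u : U) : ℤ :=
  if I.mU M u = I.mU N u then 0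
  else if I.valU u (I.mU M u) < I.valU u (I.mU N u) then -1 else 1

def wVoteW (I : PrefInst U W E) (M N : Finset E) (w : W) : ℤ :=
  if I.mW M w = I.mW N w then 0
  else if I.valW w (I.mW M w) < I.valW w (I.mW N w) then -1 else 1

/-- Super vote of `u`: `0` if same partner, `-1` if the new partner is weakly
preferred (and different), `+1` only on strict worsening. -/
def supVoteU (I : PrefInst U W E) (M N : Finset E) (u : U) : ℤ :=
  if I.mU M u = I.mU N u then 0
  else if I.valU u (I.mU M u) ≤ I.valU u (I.mU N u) then -1 else 1

def supVoteW (I : PrefInst U W E) (M N : Finset E) (w : W) : ℤ :=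
  if I.mW M w = I.mW N w then 0
  else if I.valW w (I.mW M w) ≤ I.valW w (I.mW N w) then -1 else 1

/-- γ-vote of `u`: `0` if same partner; `-1` if `p_u(N(u)) ≥ p_u(M(u)) + γ_{N(u)}^u`;
`+1` otherwise (partner changed without a γ-sized improvement). -/
def gVoteU (I : PrefInst U W E) (γU : E → ℝ) (M N : Finset E) (u : U) : ℤ :=
  if I.mU M u = I.mU N u then 0
  else match I.mU N u with
    | none => 1
    | some e => if I.valU u (I.mU M u) + γU e ≤ I.pU u e then -1 else 1

def gVoteW (I : PrefInst U W E) (γW : E → ℝ) (M N : Finset E) (w : W) : ℤ :=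
  if I.mW M w = I.mW N w then 0
  else match I.mW N w with
    | none => 1
    | some e => if I.valW w (I.mW M w) + γW e ≤ I.pW w e then -1 else 1

variable [Fintype U] [Fintype W]

/-- Popularity (standard votes): `M` never loses a head-to-head comparison. -/
def Popular (I : PrefInst U W E) (M : Finset E) : Prop :=
  ∀ N, I.IsMatching N → 0 ≤ (∑ u, I.sVoteU M N u) + ∑ w, I.sVoteW M N w

/-- Weak popularity. -/
def WeaklyPopular (I : PrefInst U W E) (M : Finset E) : Prop :=
  ∀ N, I.IsMatching N → 0 ≤ (∑ u, I.wVoteU M N u) + ∑ w, I.wVoteW M N w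

/-- Super popularity. -/
def SuperPopular (I : PrefInst U W E) (M : Finset E) : Prop :=
  ∀ N, I.IsMatching N → 0 ≤ (∑ u, I.supVoteU M N u) + ∑ w, I.supVoteW M N w

/-- γ-popularity. -/
def GammaPopular (I : PrefInst U W E) (γU γW : E → ℝ) (M : Finset E) : Prop :=
  ∀ N, I.IsMatching N → 0 ≤ (∑ u, I.gVoteU γU M N u) + ∑ w, I.gVoteW γW M N w

end PrefInst
end

namespace PrefInst

variable {E : Type} [DecidableEq E] [Fintype E] {n : ℕ}

/-- The reduction instance `I'` built from an SMTI instance `I` on `U = W = Fin n`: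
for each `i` a new W-side agent `z_i` (preferring `u_i` to `z_i'`) and a new
U-side agent `z_i'` (accepting only `z_i`) are added; `u_i`'s list becomes `z_i`
followed by his original list (encoded by giving the new edge `(u_i,z_i)` value
strictly above all of `u_i`'s original values).  Edges: `inl e` are originals,
`inr (inl i) = (u_i, z_i)` and `inr (inr i) = (z_i', z_i)`. -/
noncomputable def redI (I : PrefInst (Fin n) (Fin n) E) :
    PrefInst (Fin n ⊕ Fin n) (Fin n ⊕ Fin n) (E ⊕ Fin n ⊕ Fin n) where
  src := Sum.elim (fun e => Sum.inl (I.src e)) (Sum.elim Sum.inl Sum.inr)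
  dst := Sum.elim (fun e => Sum.inl (I.dst e)) (Sum.elim Sum.inr Sum.inr)
  pU := fun v d =>
    match v, d with
    | Sum.inl i, Sum.inl e => I.pU i e
    | Sum.inl i, Sum.inr (Sum.inl j) => if i = j then 1 + ∑ e, I.pU i e else 0
    | Sum.inl _, Sum.inr (Sum.inr _) => 0
    | Sum.inr i, Sum.inr (Sum.inr j) => if i = j then 1 else 0
    | Sum.inr _, _ => 0
  pW := fun v d =>
    match v, d with
    | Sum.inl i, Sum.inl e => I.pW i e
    | Sum.inl _, _ => 0
    | Sum.inr i, Sum.inr (Sum.inl j) => if i = j then 2 else 0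
    | Sum.inr i, Sum.inr (Sum.inr j) => if i = j then 1 else 0
    | Sum.inr _, Sum.inl _ => 0

end PrefInst

/-!
Let `M₀` be the set of original edges of the weakly popular matching `M'`. Every dummy edge of `M'`
occupies its own `z_k`, so `M'` has at most `n` of them and `|M₀| ≥ n - l`.

If an edge `e = (u, w)` blocked `M₀` while `u` or `w` is matched in `M₀`, a local exchange around
`e` would beat `M'` in weak votes: `u` and `w` switch to `e`, an agent `u_k` displaced from `w`
moves up to its first choice `z_k` (which prefers `u_k` to `z_k'`), and if `u = u_i` held `z_i`,
then `z_i` falls back on `z_i'`. So every edge blocking `M₀` joins two `M₀`-free vertices,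
and adding to `M₀` a weakly stable matching of the edges between `M₀`-free vertices, which exists
by Gale–Shapley since the `U` side has strict preferences, yields a weakly stable matching of `I`.
-/

namespace PrefInst

section Matchings

variable {U W E : Type} (I : PrefInst U W E) {M N S T : Finset E} {u : U} {w : W} {e d : E}

@[simp] theorem valU_none : I.valU u none = 0 := rfl
@[simp] theorem valU_some : I.valU u (some e) = I.pU u e := rfl
@[simp] theorem valW_none : I.valW w none = 0 := rfl
@[simp] theorem valW_some : I.valW w (some e) = I.pW w e := rfl

theorem valU_nonneg (hpU : ∀ u e, 0 ≤ I.pU u e) (o : Option E) : 0 ≤ I.valU u o := by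
  cases o <;> simp [hpU]

theorem valW_nonneg (hpW : ∀ w e, 0 ≤ I.pW w e) (o : Option E) : 0 ≤ I.valW w o := by
  cases o <;> simp [hpW]

theorem mem_of_mU_eq_some [DecidableEq U] (h : I.mU M u = some e) : e ∈ M ∧ I.src e = u := by
  have : e ∈ M.filter (I.src · = u) := by
    rw [← mem_toList]; exact List.mem_of_mem_head? h
  simpa using this

theorem mem_of_mW_eq_some [DecidableEq W] (h : I.mW M w = some e) : e ∈ M ∧ I.dst e = w := by
  have : e ∈ M.filter (I.dst · = w) := by
    rw [← mem_toList]; exact List.mem_of_mem_head? h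
  simpa using this

theorem mU_eq_none_iff [DecidableEq U] : I.mU M u = none ↔ ∀ d ∈ M, I.src d ≠ u := by
  simp [mU, List.head?_eq_none_iff, filter_eq_empty_iff]

theorem mW_eq_none_iff [DecidableEq W] : I.mW M w = none ↔ ∀ d ∈ M, I.dst d ≠ w := by
  simp [mW, List.head?_eq_none_iff, filter_eq_empty_iff]

variable {I}

theorem IsMatching.src_injOn (hM : I.IsMatching M) : Set.InjOn I.src M :=
  fun d hd e he h => by_contra fun hne => (hM d hd e he hne).1 h

theorem IsMatching.dst_injOn (hM : I.IsMatching M) : Set.InjOn I.dst M :=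
  fun d hd e he h => by_contra fun hne => (hM d hd e he hne).2 h

theorem IsMatching.mU_eq_some [DecidableEq U] (hM : I.IsMatching M) (he : e ∈ M)
    (hu : I.src e = u) : I.mU M u = some e := by
  have : M.filter (I.src · = u) = {e} :=
    eq_singleton_iff_unique_mem.2 ⟨mem_filter.2 ⟨he, hu⟩,
      fun d hd => hM.src_injOn (mem_filter.1 hd).1 he ((mem_filter.1 hd).2.trans hu.symm)⟩
  simp [mU, this]

theorem IsMatching.mW_eq_some [DecidableEq W] (hM : I.IsMatching M) (he : e ∈ M)
    (hw : I.dst e = w) : I.mW M w = some e := by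
  have : M.filter (I.dst · = w) = {e} :=
    eq_singleton_iff_unique_mem.2 ⟨mem_filter.2 ⟨he, hw⟩,
      fun d hd => hM.dst_injOn (mem_filter.1 hd).1 he ((mem_filter.1 hd).2.trans hw.symm)⟩
  simp [mW, this]

theorem IsMatching.eq_of_mU_eq_some [DecidableEq U] (hM : I.IsMatching M)
    (h : I.mU M u = some e) (hd : d ∈ M) (hdu : I.src d = u) : d = e :=
  Option.some_injective _ ((hM.mU_eq_some hd hdu).symm.trans h)

theorem IsMatching.eq_of_mW_eq_some [DecidableEq W] (hM : I.IsMatching M)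
    (h : I.mW M w = some e) (hd : d ∈ M) (hdw : I.dst d = w) : d = e :=
  Option.some_injective _ ((hM.mW_eq_some hd hdw).symm.trans h)

theorem isMatching_singleton (e : E) : I.IsMatching {e} := by
  intro a ha b hb hab
  exact absurd ((mem_singleton.1 ha).trans (mem_singleton.1 hb).symm) hab

theorem IsMatching.insert [DecidableEq E] (hM : I.IsMatching M)
    (h : ∀ d ∈ M, I.src d ≠ I.src e ∧ I.dst d ≠ I.dst e) : I.IsMatching (insert e M) := by
  intro a ha b hb hab
  rcases mem_insert.1 ha with rfl | ha' <;> rcases mem_insert.1 hb with rfl | hb'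
  · exact absurd rfl hab
  · exact (h b hb').imp Ne.symm Ne.symm
  · exact h a ha'
  · exact hM a ha' b hb' hab

theorem IsMatching.subset (hM : I.IsMatching M) (h : N ⊆ M) : I.IsMatching N :=
  fun d hd e he => hM d (h hd) e (h he)

theorem IsMatching.union [DecidableEq E] (hM : I.IsMatching M) (hN : I.IsMatching N)
    (h : ∀ d ∈ M, ∀ e ∈ N, I.src d ≠ I.src e ∧ I.dst d ≠ I.dst e) :
    I.IsMatching (M ∪ N) := by
  intro d hd e he hne
  rcases mem_union.1 hd with hd | hd <;> rcases mem_union.1 he with he | he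
  · exact hM d hd e he hne
  · exact h d hd e he
  · exact (h e he d hd).imp Ne.symm Ne.symm
  · exact hN d hd e he hne

theorem IsMatching.sdiff_union [DecidableEq E] (hM : I.IsMatching M) (hT : I.IsMatching T)
    (hU : ∀ t ∈ T, ∀ d ∈ M, I.src d = I.src t → d ∈ S)
    (hW : ∀ t ∈ T, ∀ d ∈ M, I.dst d = I.dst t → d ∈ S) :
    I.IsMatching ((M \ S) ∪ T) := by
  refine (hM.subset sdiff_subset).union hT fun d hd t ht => ⟨fun h => ?_, fun h => ?_⟩
  · exact (mem_sdiff.1 hd).2 (hU t ht d (mem_sdiff.1 hd).1 h)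
  · exact (mem_sdiff.1 hd).2 (hW t ht d (mem_sdiff.1 hd).1 h)

theorem mU_sdiff_union [DecidableEq U] [DecidableEq E] (h : ∀ d ∈ S ∪ T, I.src d ≠ u) :
    I.mU ((M \ S) ∪ T) u = I.mU M u := by
  have : (M \ S ∪ T).filter (I.src · = u) = M.filter (I.src · = u) := by
    ext d
    have := h d
    simp only [mem_filter, mem_union, mem_sdiff] at this ⊢
    tauto
  simp only [mU, this]

theorem mW_sdiff_union [DecidableEq W] [DecidableEq E] (h : ∀ d ∈ S ∪ T, I.dst d ≠ w) :
    I.mW ((M \ S) ∪ T) w = I.mW M w := by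
  have : (M \ S ∪ T).filter (I.dst · = w) = M.filter (I.dst · = w) := by
    ext d
    have := h d
    simp only [mem_filter, mem_union, mem_sdiff] at this ⊢
    tauto
  simp only [mW, this]

theorem valU_le_of_subset [DecidableEq U] (hpU : ∀ u e, 0 ≤ I.pU u e) (hN : I.IsMatching N)
    (h : M ⊆ N) : I.valU u (I.mU M u) ≤ I.valU u (I.mU N u) := by
  rcases hm : I.mU M u with _ | d
  · exact I.valU_nonneg hpU _
  · obtain ⟨hd, hdu⟩ := I.mem_of_mU_eq_some hm
    rw [hN.mU_eq_some (h hd) hdu]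

theorem valW_le_of_subset [DecidableEq W] (hpW : ∀ w e, 0 ≤ I.pW w e) (hN : I.IsMatching N)
    (h : M ⊆ N) : I.valW w (I.mW M w) ≤ I.valW w (I.mW N w) := by
  rcases hm : I.mW M w with _ | d
  · exact I.valW_nonneg hpW _
  · obtain ⟨hd, hdw⟩ := I.mem_of_mW_eq_some hm
    rw [hN.mW_eq_some (h hd) hdw]

theorem Blocks.of_subset [DecidableEq U] [DecidableEq W] (hpU : ∀ u e, 0 ≤ I.pU u e)
    (hpW : ∀ w e, 0 ≤ I.pW w e) (hN : I.IsMatching N) (h : M ⊆ N) (hb : I.Blocks N e)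
    (he : e ∉ M) : I.Blocks M e :=
  ⟨he, (valU_le_of_subset hpU hN h).trans_lt hb.2.1,
    (valW_le_of_subset hpW hN h).trans_lt hb.2.2⟩

end Matchings

section Votes

variable {U W E : Type} {I : PrefInst U W E} {M N S T : Finset E} {e : E} [DecidableEq E]

theorem wVoteU_le_one [DecidableEq U] (M N : Finset E) (u : U) : I.wVoteU M N u ≤ 1 := by
  unfold wVoteU; split_ifs <;> norm_num

theorem wVoteW_le_one [DecidableEq W] (M N : Finset E) (w : W) : I.wVoteW M N w ≤ 1 := by
  unfold wVoteW; split_ifs <;> norm_num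

theorem wVoteU_eq_neg_one [DecidableEq U] (hN : I.IsMatching N) (he : e ∈ N)
    (h : I.valU (I.src e) (I.mU M (I.src e)) < I.pU (I.src e) e) :
    I.wVoteU M N (I.src e) = -1 := by
  rw [wVoteU, hN.mU_eq_some he rfl, if_neg (fun h' => by rw [h'] at h; exact lt_irrefl _ h),
    valU_some, if_pos h]

theorem wVoteW_eq_neg_one [DecidableEq W] (hN : I.IsMatching N) (he : e ∈ N)
    (h : I.valW (I.dst e) (I.mW M (I.dst e)) < I.pW (I.dst e) e) :
    I.wVoteW M N (I.dst e) = -1 := by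
  rw [wVoteW, hN.mW_eq_some he rfl, if_neg (fun h' => by rw [h'] at h; exact lt_irrefl _ h),
    valW_some, if_pos h]

/-- Only the endpoints of `S ∪ T` can change partner. -/
theorem WeaklyPopular.exchange_votes_nonneg [DecidableEq U] [DecidableEq W] [Fintype U]
    [Fintype W] (hpop : I.WeaklyPopular M) (hN : I.IsMatching ((M \ S) ∪ T))
    {sU : Finset U} {sW : Finset W}
    (hsU : ∀ d ∈ S ∪ T, I.src d ∈ sU) (hsW : ∀ d ∈ S ∪ T, I.dst d ∈ sW) :
    0 ≤ ∑ u ∈ sU, I.wVoteU M ((M \ S) ∪ T) u + ∑ w ∈ sW, I.wVoteW M ((M \ S) ∪ T) w := by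
  have hU : ∑ u ∈ sU, I.wVoteU M ((M \ S) ∪ T) u = ∑ u, I.wVoteU M ((M \ S) ∪ T) u :=
    sum_subset (subset_univ _) fun u _ hu => by
      rw [wVoteU, if_pos (I.mU_sdiff_union (M := M)
        fun d hd (h : I.src d = u) => hu (h ▸ hsU d hd)).symm]
  have hW : ∑ w ∈ sW, I.wVoteW M ((M \ S) ∪ T) w = ∑ w, I.wVoteW M ((M \ S) ∪ T) w :=
    sum_subset (subset_univ _) fun w _ hw => by
      rw [wVoteW, if_pos (I.mW_sdiff_union (M := M)
        fun d hd (h : I.dst d = w) => hw (h ▸ hsW d hd)).symm]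
  rw [hU, hW]
  exact hpop _ hN

end Votes

section GaleShapley

variable {U W E : Type} {I : PrefInst U W E} {M A : Finset E} {e g : E}

def HasStrictUPrefs (I : PrefInst U W E) : Prop :=
  ∀ u e f, I.src e = u → I.src f = u → I.pU u e = I.pU u f → e = f

def IsTopChoice (I : PrefInst U W E) (A : Finset E) (e : E) : Prop :=
  e ∈ A ∧ 0 < I.pU (I.src e) e ∧
    ∀ f ∈ A, I.src f = I.src e → I.pU (I.src e) f ≤ I.pU (I.src e) e

theorem IsTopChoice.valU_lt [DecidableEq U] (hstrict : I.HasStrictUPrefs)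
    (ht : I.IsTopChoice A e) (hMA : M ⊆ A) (heM : e ∉ M) :
    I.valU (I.src e) (I.mU M (I.src e)) < I.pU (I.src e) e := by
  rcases hm : I.mU M (I.src e) with _ | f
  · exact ht.2.1
  · obtain ⟨hfM, hfe⟩ := I.mem_of_mU_eq_some hm
    refine (ht.2.2 f (hMA hfM) hfe).lt_of_ne fun h => heM ?_
    rwa [← hstrict _ f e hfe rfl h]

theorem exists_isTopChoice (hg : g ∈ A) (hpos : 0 < I.pU (I.src g) g) :
    ∃ t, I.IsTopChoice A t ∧ I.src t = I.src g := by
  obtain ⟨t, ht, htop⟩ := exists_max_image (A.filter (I.src · = I.src g))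
    (fun f => I.pU (I.src g) f) ⟨g, mem_filter.2 ⟨hg, rfl⟩⟩
  obtain ⟨htA, hts⟩ := mem_filter.1 ht
  refine ⟨t, ⟨htA, ?_, fun f hf hft => ?_⟩, hts⟩ <;> rw [hts]
  · exact hpos.trans_le (htop g (mem_filter.2 ⟨hg, rfl⟩))
  · exact htop f (mem_filter.2 ⟨hf, hft.trans hts⟩)

theorem isMatching_filter_isTopChoice (hstrict : I.HasStrictUPrefs)
    (hW : ∀ e, I.IsTopChoice A e → ∀ g ∈ A, g ≠ e → I.dst g = I.dst e →
      I.pW (I.dst e) e < I.pW (I.dst e) g) :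
    I.IsMatching (A.filter (I.IsTopChoice A)) := by
  intro a ha b hb hab
  obtain ⟨ha, hta⟩ := mem_filter.1 ha
  obtain ⟨hb, htb⟩ := mem_filter.1 hb
  refine ⟨fun h => hab (hstrict _ a b rfl h.symm ?_), fun h => ?_⟩
  · exact le_antisymm (h ▸ htb.2.2 a ha h) (hta.2.2 b hb h.symm)
  · have := hW a hta b hb hab.symm h.symm
    have := hW b htb a ha hab h
    rw [h] at *
    linarith

theorem not_blocks_filter_isTopChoice [DecidableEq U] [DecidableEq W] (hg : g ∈ A) :
    ¬ I.Blocks (A.filter (I.IsTopChoice A)) g := by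
  rintro ⟨-, hU, -⟩
  rcases hm : I.mU (A.filter (I.IsTopChoice A)) (I.src g) with _ | t
  · rw [hm, valU_none] at hU
    obtain ⟨t, ht, hts⟩ := exists_isTopChoice hg hU
    exact (I.mU_eq_none_iff.1 hm) t (mem_filter.2 ⟨ht.1, ht⟩) hts
  · obtain ⟨htM, hts⟩ := I.mem_of_mU_eq_some hm
    have htop := (mem_filter.1 htM).2.2.2 g hg hts.symm
    rw [hm, valU_some, ← hts] at hU
    exact hU.not_ge htop

theorem not_blocks_of_isTopChoice [DecidableEq U] [DecidableEq W] (hstrict : I.HasStrictUPrefs)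
    (hM : I.IsMatching M) (hMA : M ⊆ A.erase g) (hnb : ∀ f ∈ A.erase g, ¬ I.Blocks M f)
    (he : I.IsTopChoice A e) (hge : g ≠ e) (hdst : I.dst g = I.dst e)
    (hle : I.pW (I.dst e) g ≤ I.pW (I.dst e) e) : ¬ I.Blocks M g := by
  rintro ⟨-, -, hW⟩
  rw [hdst] at hW
  by_cases heM : e ∈ M
  · rw [hM.mW_eq_some heM rfl, valW_some] at hW
    exact hW.not_ge hle
  · refine hnb e (mem_erase.2 ⟨hge.symm, he.1⟩) ⟨heM, he.valU_lt hstrict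
      (hMA.trans (erase_subset g A)) heM, hW.trans_le hle⟩

/-- Gale–Shapley by deletions: an edge that a `W`-vertex likes at most as much as a top choice it
receives can be deleted, and once no such edge is left the top choices form a stable matching. -/
theorem exists_weaklyStable_subset [DecidableEq U] [DecidableEq W] (hstrict : I.HasStrictUPrefs)
    (A : Finset E) : ∃ M ⊆ A, I.IsMatching M ∧ ∀ e ∈ A, ¬ I.Blocks M e := by
  induction A using Finset.strongInduction with
  | H A ih =>
  by_cases hdel : ∃ e, I.IsTopChoice A e ∧ ∃ g ∈ A, g ≠ e ∧ I.dst g = I.dst e ∧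
      I.pW (I.dst e) g ≤ I.pW (I.dst e) e
  · obtain ⟨e, he, g, hg, hge, hdst, hle⟩ := hdel
    obtain ⟨M, hMA, hM, hnb⟩ := ih (A.erase g) (erase_ssubset hg)
    refine ⟨M, hMA.trans (erase_subset g A), hM, fun f hf => ?_⟩
    obtain rfl | hfg := eq_or_ne f g
    · exact not_blocks_of_isTopChoice hstrict hM hMA hnb he hge hdst hle
    · exact hnb f (mem_erase.2 ⟨hfg, hf⟩)
  · push Not at hdel
    exact ⟨_, filter_subset _ A, isMatching_filter_isTopChoice hstrict hdel,
      fun g hg => not_blocks_filter_isTopChoice hg⟩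

/-- `M₀` is completed by a weakly stable matching of the edges between `M₀`-free vertices. -/
theorem exists_weaklyStable_superset [DecidableEq U] [DecidableEq W] [DecidableEq E] [Fintype E]
    (hstrict : I.HasStrictUPrefs) (hpU : ∀ u e, 0 ≤ I.pU u e) (hpW : ∀ w e, 0 ≤ I.pW w e)
    {M₀ : Finset E} (hM₀ : I.IsMatching M₀)
    (hfree : ∀ e, I.Blocks M₀ e → I.mU M₀ (I.src e) = none ∧ I.mW M₀ (I.dst e) = none) :
    ∃ M, M₀ ⊆ M ∧ I.IsMatching M ∧ I.WeaklyStable M := by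
  set A := univ.filter fun f => I.mU M₀ (I.src f) = none ∧ I.mW M₀ (I.dst f) = none
  obtain ⟨M₁, hM₁A, hM₁, hnb⟩ := I.exists_weaklyStable_subset hstrict A
  have hM : I.IsMatching (M₀ ∪ M₁) := hM₀.union hM₁ fun d hd f hf => by
    obtain ⟨hfU, hfW⟩ := (mem_filter.1 (hM₁A hf)).2
    exact ⟨I.mU_eq_none_iff.1 hfU d hd, I.mW_eq_none_iff.1 hfW d hd⟩
  refine ⟨M₀ ∪ M₁, subset_union_left, hM, fun f hf => ?_⟩
  have hfM : f ∉ M₀ ∪ M₁ := hf.1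
  have hfA : f ∈ A := mem_filter.2 ⟨mem_univ f,
    hfree f (hf.of_subset hpU hpW hM subset_union_left fun h => hfM (mem_union_left _ h))⟩
  exact hnb f hfA (hf.of_subset hpU hpW hM subset_union_right fun h => hfM (mem_union_right _ h))

end GaleShapley

section Reduction

variable {E : Type} [Fintype E] {n : ℕ} (I : PrefInst (Fin n) (Fin n) E) {i j k : Fin n}
  {e f g : E} {d : E ⊕ Fin n ⊕ Fin n} {M N : Finset (E ⊕ Fin n ⊕ Fin n)}

@[simp] theorem redI_src_inl : I.redI.src (.inl f) = .inl (I.src f) := rfl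
@[simp] theorem redI_dst_inl : I.redI.dst (.inl f) = .inl (I.dst f) := rfl
@[simp] theorem redI_src_inr_inl : I.redI.src (.inr (.inl k)) = .inl k := rfl
@[simp] theorem redI_dst_inr_inl : I.redI.dst (.inr (.inl k)) = .inr k := rfl
@[simp] theorem redI_src_inr_inr : I.redI.src (.inr (.inr k)) = .inr k := rfl
@[simp] theorem redI_dst_inr_inr : I.redI.dst (.inr (.inr k)) = .inr k := rfl

@[simp] theorem redI_pU_inl : I.redI.pU (.inl i) (.inl f) = I.pU i f := rfl
@[simp] theorem redI_pW_inl : I.redI.pW (.inl i) (.inl f) = I.pW i f := rfl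
@[simp] theorem redI_pU_inr_inl : I.redI.pU (.inl k) (.inr (.inl k)) = 1 + ∑ e, I.pU k e := by
  simp [redI]
@[simp] theorem redI_pW_inr_inl : I.redI.pW (.inr k) (.inr (.inl k)) = 2 := by simp [redI]
@[simp] theorem redI_pU_inr_inr : I.redI.pU (.inr k) (.inr (.inr k)) = 1 := by simp [redI]
@[simp] theorem redI_pW_inr_inr : I.redI.pW (.inr k) (.inr (.inr k)) = 1 := by simp [redI]

variable {I}

theorem redI_src_eq_inl (h : I.redI.src d = .inl i) :
    (∃ f, d = .inl f ∧ I.src f = i) ∨ d = .inr (.inl i) := by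
  rcases d with f | k | k <;> simp_all

theorem redI_src_eq_inr (h : I.redI.src d = .inr i) : d = .inr (.inr i) := by
  rcases d with f | k | k <;> simp_all

theorem redI_dst_eq_inl (h : I.redI.dst d = .inl i) : ∃ f, d = .inl f ∧ I.dst f = i := by
  rcases d with f | k | k <;> simp_all

theorem redI_dst_eq_inr (h : I.redI.dst d = .inr k) : d = .inr (.inl k) ∨ d = .inr (.inr k) := by
  rcases d with f | k | k <;> simp_all

theorem IsMatching.toLeft_of_redI (hM : I.redI.IsMatching M) : I.IsMatching M.toLeft :=
  fun a ha b hb hab => by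
    simpa using hM _ (mem_toLeft.1 ha) _ (mem_toLeft.1 hb) (by simpa using hab)

theorem redI_mU_inl_of_toLeft (hM : I.redI.IsMatching M) (h : I.mU M.toLeft i = some f) :
    I.redI.mU M (.inl i) = some (.inl f) := by
  obtain ⟨hf, rfl⟩ := I.mem_of_mU_eq_some h
  exact hM.mU_eq_some (mem_toLeft.1 hf) rfl

theorem redI_mW_inl_of_toLeft (hM : I.redI.IsMatching M) (h : I.mW M.toLeft j = some f) :
    I.redI.mW M (.inl j) = some (.inl f) := by
  obtain ⟨hf, rfl⟩ := I.mem_of_mW_eq_some h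
  exact hM.mW_eq_some (mem_toLeft.1 hf) rfl

theorem redI_mW_inl_eq_none (h : I.mW M.toLeft j = none) : I.redI.mW M (.inl j) = none := by
  refine I.redI.mW_eq_none_iff.2 fun d hd hdj => ?_
  obtain ⟨f, rfl, hfj⟩ := redI_dst_eq_inl hdj
  exact I.mW_eq_none_iff.1 h f (mem_toLeft.2 hd) hfj

theorem eq_inr_inl_of_mU_toLeft_eq_none (h : I.mU M.toLeft i = none) (hd : d ∈ M)
    (hdi : I.redI.src d = .inl i) : d = .inr (.inl i) := by
  rcases redI_src_eq_inl hdi with ⟨f, rfl, hfi⟩ | rfl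
  · exact absurd hfi (I.mU_eq_none_iff.1 h f (mem_toLeft.2 hd))
  · rfl

theorem inr_inl_notMem_of_inl_mem (hM : I.redI.IsMatching M) (hf : .inl f ∈ M) :
    .inr (.inl (I.src f)) ∉ M :=
  fun h => Sum.inr_ne_inl (hM.src_injOn h hf rfl)

theorem redI_valU_inl_lt (hpU : ∀ u e, 0 ≤ I.pU u e) (hk : .inr (.inl k) ∉ M) :
    I.redI.valU (.inl k) (I.redI.mU M (.inl k)) < 1 + ∑ e, I.pU k e := by
  have hsum : 0 ≤ ∑ e, I.pU k e := sum_nonneg fun e _ => hpU k e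
  rcases hm : I.redI.mU M (.inl k) with _ | d
  · simp only [valU_none]; linarith
  · obtain ⟨hd, hdk⟩ := I.redI.mem_of_mU_eq_some hm
    rcases redI_src_eq_inl hdk with ⟨f, rfl, rfl⟩ | rfl
    · simp only [valU_some, redI_pU_inl]
      linarith [single_le_sum (fun e _ => hpU (I.src f) e) (mem_univ f)]
    · exact absurd hd hk

theorem redI_valW_inr_lt (hk : .inr (.inl k) ∉ M) :
    I.redI.valW (.inr k) (I.redI.mW M (.inr k)) < 2 := by
  rcases hm : I.redI.mW M (.inr k) with _ | d
  · norm_num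
  · obtain ⟨hd, hdk⟩ := I.redI.mem_of_mW_eq_some hm
    rcases redI_dst_eq_inr hdk with rfl | rfl
    · exact absurd hd hk
    · norm_num

theorem redI_valU_inr_lt (hk : .inr (.inr k) ∉ M) :
    I.redI.valU (.inr k) (I.redI.mU M (.inr k)) < 1 := by
  rcases hm : I.redI.mU M (.inr k) with _ | d
  · norm_num
  · obtain ⟨hd, hdk⟩ := I.redI.mem_of_mU_eq_some hm
    exact absurd (redI_src_eq_inr hdk ▸ hd) hk

/-- Each edge `(u_k, z_k)` or `(z_k', z_k)` of a matching occupies its own `z_k`. -/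
theorem card_toRight_le_of_redI (hM : I.redI.IsMatching M) : #M.toRight ≤ n := by
  have hdst : ∀ a : Fin n ⊕ Fin n, I.redI.dst (.inr a) = .inr (Sum.elim id id a) := by
    rintro (k | k) <;> rfl
  simpa using card_le_card_of_injOn (t := univ) (Sum.elim id id) (fun _ _ => mem_coe.2 (mem_univ _))
    fun a ha b hb hab => Sum.inr_injective <| hM.dst_injOn (mem_toRight.1 ha) (mem_toRight.1 hb)
      (by rw [hdst, hdst, hab])

variable [DecidableEq E]

theorem redI_wVoteU_inl_eq_neg_one (hpU : ∀ u e, 0 ≤ I.pU u e) (hN : I.redI.IsMatching N)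
    (hkN : .inr (.inl k) ∈ N) (hkM : .inr (.inl k) ∉ M) : I.redI.wVoteU M N (.inl k) = -1 :=
  wVoteU_eq_neg_one hN hkN (by simpa using redI_valU_inl_lt hpU hkM)

theorem redI_wVoteW_inr_eq_neg_one (hN : I.redI.IsMatching N) (hkN : .inr (.inl k) ∈ N)
    (hkM : .inr (.inl k) ∉ M) : I.redI.wVoteW M N (.inr k) = -1 :=
  wVoteW_eq_neg_one hN hkN (by simpa using redI_valW_inr_lt hkM)

theorem redI_wVoteU_inr_eq_neg_one (hN : I.redI.IsMatching N) (hkN : .inr (.inr k) ∈ N)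
    (hkM : .inr (.inr k) ∉ M) : I.redI.wVoteU M N (.inr k) = -1 :=
  wVoteU_eq_neg_one hN hkN (by simpa using redI_valU_inr_lt hkM)

/-- Otherwise `u_i` and `z_i` would both vote for taking `(u_i, z_i)`, against `z_i'` alone. -/
theorem WeaklyPopular.redI_inr_inl_mem (hpU : ∀ u e, 0 ≤ I.pU u e) (hM : I.redI.IsMatching M)
    (hpop : I.redI.WeaklyPopular M) (h : I.mU M.toLeft i = none) : .inr (.inl i) ∈ M := by
  by_contra hi
  have hN : I.redI.IsMatching ((M \ {.inr (.inr i)}) ∪ {.inr (.inl i)}) := by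
    refine hM.sdiff_union (isMatching_singleton _) (fun t ht d hd hdt => ?_) fun t ht d hd hdt => ?_
    <;> rw [mem_singleton.1 ht] at hdt
    · exact absurd (eq_inr_inl_of_mU_toLeft_eq_none h hd hdt ▸ hd) hi
    · rcases redI_dst_eq_inr hdt with rfl | rfl
      · exact absurd hd hi
      · exact mem_singleton_self _
  have h0 := hpop.exchange_votes_nonneg hN (sU := {.inl i, .inr i}) (sW := {.inr i})
    (by simp) (by simp)
  rw [sum_pair (by simp), sum_singleton, redI_wVoteU_inl_eq_neg_one hpU hN (by simp) hi,
    redI_wVoteW_inr_eq_neg_one hN (by simp) hi] at h0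
  linarith [wVoteU_le_one (I := I.redI) M ((M \ {.inr (.inr i)}) ∪ {.inr (.inl i)}) (.inr i)]

theorem WeaklyPopular.redI_not_blocks_of_mW_toLeft_eq_none_or_same (hM : I.redI.IsMatching M)
    (hpop : I.redI.WeaklyPopular M) (hb : I.Blocks M.toLeft e)
    (hf : I.mU M.toLeft (I.src e) = some f)
    (hw : I.mW M.toLeft (I.dst e) = none ∨ I.mW M.toLeft (I.dst e) = some f) : False := by
  obtain ⟨he, hbU, hbW⟩ := hb
  obtain ⟨hfM, hfe⟩ := I.mem_of_mU_eq_some hf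
  have hMu := redI_mU_inl_of_toLeft hM hf
  -- `src e` and `dst e` vote for `N`; only `dst f` may vote for `M`.
  set N := (M \ {.inl f}) ∪ {.inl e}
  have hN : I.redI.IsMatching N := by
    refine hM.sdiff_union (isMatching_singleton _) (fun t ht d hd hdt => ?_) fun t ht d hd hdt => ?_
    <;> rw [mem_singleton.1 ht] at hdt <;> rw [mem_singleton]
    · exact hM.eq_of_mU_eq_some hMu hd hdt
    · rcases hw with hw | hw
      · exact absurd hdt (I.redI.mW_eq_none_iff.1 (redI_mW_inl_eq_none hw) d hd)
      · exact hM.eq_of_mW_eq_some (redI_mW_inl_of_toLeft hM hw) hd hdt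
  have hNe : .inl e ∈ N := mem_union_right _ (mem_singleton_self _)
  have vU : I.redI.wVoteU M N (.inl (I.src e)) = -1 :=
    wVoteU_eq_neg_one hN hNe (by simpa [hMu, hf] using hbU)
  have h0 := hpop.exchange_votes_nonneg hN (sU := {.inl (I.src e)})
    (sW := {.inl (I.dst e), .inl (I.dst f)}) (by simp [hfe]) (by simp)
  rw [sum_singleton, vU] at h0
  rcases hw with hw | hw
  · have vW : I.redI.wVoteW M N (.inl (I.dst e)) = -1 :=
      wVoteW_eq_neg_one hN hNe (by simpa [redI_mW_inl_eq_none hw, hw] using hbW)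
    have hff : I.dst f ≠ I.dst e := fun h => by simp [I.mW_eq_none_iff.1 hw f hfM] at h
    rw [sum_pair (by simpa using hff.symm), vW] at h0
    linarith [wVoteW_le_one (I := I.redI) M N (.inl (I.dst f))]
  · have vW : I.redI.wVoteW M N (.inl (I.dst e)) = -1 :=
      wVoteW_eq_neg_one hN hNe (by simpa [redI_mW_inl_of_toLeft hM hw, hw] using hbW)
    rw [(I.mem_of_mW_eq_some hw).2, pair_eq_singleton, sum_singleton, vW] at h0
    linarith

theorem WeaklyPopular.redI_not_blocks_of_mW_toLeft_eq_some_ne (hpU : ∀ u e, 0 ≤ I.pU u e)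
    (hM : I.redI.IsMatching M) (hpop : I.redI.WeaklyPopular M) (hb : I.Blocks M.toLeft e)
    (hf : I.mU M.toLeft (I.src e) = some f) (hg : I.mW M.toLeft (I.dst e) = some g)
    (hgf : g ≠ f) : False := by
  obtain ⟨he, hbU, hbW⟩ := hb
  obtain ⟨hfM, hfe⟩ := I.mem_of_mU_eq_some hf
  obtain ⟨hgM, hge⟩ := I.mem_of_mW_eq_some hg
  have hM₀ := hM.toLeft_of_redI
  have hk : I.src g ≠ I.src e := fun h => hgf (hM₀.eq_of_mU_eq_some hf hgM h)
  have hff : I.dst f ≠ I.dst e := fun h => hgf (hM₀.eq_of_mW_eq_some hg hfM h).symm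
  have hzk := inr_inl_notMem_of_inl_mem hM (mem_toLeft.1 hgM)
  have hMu := redI_mU_inl_of_toLeft hM hf
  have hMw := redI_mW_inl_of_toLeft hM hg
  have hMk : I.redI.mU M (.inl (I.src g)) = some (.inl g) := hM.mU_eq_some (mem_toLeft.1 hgM) rfl
  -- With `k = src g`: `src e`, `dst e`, `u_k` and `z_k` vote for `N`; only `dst f` and `z_k'`
  -- may vote for `M`.
  set N := (M \ {.inl f, .inl g, .inr (.inr (I.src g))}) ∪ {.inl e, .inr (.inl (I.src g))}
  have hN : I.redI.IsMatching N := by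
    refine hM.sdiff_union ((isMatching_singleton _).insert (by simp [hk]))
      (fun t ht d hd hdt => ?_) fun t ht d hd hdt => ?_
    <;> simp only [mem_insert, mem_singleton] at ht ⊢ <;> rcases ht with rfl | rfl
    · exact .inl (hM.eq_of_mU_eq_some hMu hd hdt)
    · exact .inr (.inl (hM.eq_of_mU_eq_some hMk hd hdt))
    · exact .inr (.inl (hM.eq_of_mW_eq_some hMw hd hdt))
    · rcases redI_dst_eq_inr hdt with rfl | rfl
      · exact absurd hd hzk
      · exact .inr (.inr rfl)
  have hNe : .inl e ∈ N := mem_union_right _ (by simp)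
  have hNk : .inr (.inl (I.src g)) ∈ N := mem_union_right _ (by simp)
  have vU : I.redI.wVoteU M N (.inl (I.src e)) = -1 :=
    wVoteU_eq_neg_one hN hNe (by simpa [hMu, hf] using hbU)
  have vW : I.redI.wVoteW M N (.inl (I.dst e)) = -1 :=
    wVoteW_eq_neg_one hN hNe (by simpa [hMw, hg] using hbW)
  have h0 := hpop.exchange_votes_nonneg hN
    (sU := {.inl (I.src e), .inl (I.src g), .inr (I.src g)})
    (sW := {.inl (I.dst e), .inl (I.dst f), .inr (I.src g)}) (by simp [hfe]) (by simp [hge])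
  rw [sum_insert (by simp [hk.symm]), sum_pair (by simp), sum_insert (by simp [hff.symm]),
    sum_pair (by simp), vU, vW, redI_wVoteU_inl_eq_neg_one hpU hN hNk hzk,
    redI_wVoteW_inr_eq_neg_one hN hNk hzk] at h0
  linarith [wVoteU_le_one (I := I.redI) M N (.inr (I.src g)),
    wVoteW_le_one (I := I.redI) M N (.inl (I.dst f))]

theorem WeaklyPopular.redI_not_blocks_of_mU_toLeft_eq_none (hpU : ∀ u e, 0 ≤ I.pU u e)
    (hM : I.redI.IsMatching M) (hpop : I.redI.WeaklyPopular M) (hb : I.Blocks M.toLeft e)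
    (hu : I.mU M.toLeft (I.src e) = none) (hg : I.mW M.toLeft (I.dst e) = some g) : False := by
  obtain ⟨hgM, hge⟩ := I.mem_of_mW_eq_some hg
  have hk : I.src g ≠ I.src e := I.mU_eq_none_iff.1 hu g hgM
  have hzi := hpop.redI_inr_inl_mem hpU hM hu
  have hzi' : .inr (.inr (I.src e)) ∉ M := fun h => by simpa using hM.dst_injOn h hzi rfl
  have hzk := inr_inl_notMem_of_inl_mem hM (mem_toLeft.1 hgM)
  have hMw := redI_mW_inl_of_toLeft hM hg
  have hMk : I.redI.mU M (.inl (I.src g)) = some (.inl g) := hM.mU_eq_some (mem_toLeft.1 hgM) rfl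
  -- With `i = src e` and `k = src g`: `z_i'`, `dst e`, `u_k` and `z_k` vote for `N`; only `u_i`,
  -- `z_i` and `z_k'` may vote for `M`.
  set N := (M \ {.inr (.inl (I.src e)), .inl g, .inr (.inr (I.src g))}) ∪
    {.inl e, .inr (.inr (I.src e)), .inr (.inl (I.src g))}
  have hN : I.redI.IsMatching N := by
    refine hM.sdiff_union (((isMatching_singleton _).insert (by simp [hk])).insert
      (by simp [hk])) (fun t ht d hd hdt => ?_) fun t ht d hd hdt => ?_
    <;> simp only [mem_insert, mem_singleton] at ht ⊢ <;> rcases ht with rfl | rfl | rfl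
    · exact .inl (eq_inr_inl_of_mU_toLeft_eq_none hu hd hdt)
    · exact absurd (redI_src_eq_inr hdt ▸ hd) hzi'
    · exact .inr (.inl (hM.eq_of_mU_eq_some hMk hd hdt))
    · exact .inr (.inl (hM.eq_of_mW_eq_some hMw hd hdt))
    · rcases redI_dst_eq_inr hdt with rfl | rfl
      · exact .inl rfl
      · exact absurd hd hzi'
    · rcases redI_dst_eq_inr hdt with rfl | rfl
      · exact absurd hd hzk
      · exact .inr (.inr rfl)
  have hNe : .inl e ∈ N := mem_union_right _ (by simp)
  have hNi : .inr (.inr (I.src e)) ∈ N := mem_union_right _ (by simp)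
  have hNk : .inr (.inl (I.src g)) ∈ N := mem_union_right _ (by simp)
  have vW : I.redI.wVoteW M N (.inl (I.dst e)) = -1 :=
    wVoteW_eq_neg_one hN hNe (by simpa [hMw, hg] using hb.2.2)
  have h0 := hpop.exchange_votes_nonneg hN
    (sU := {.inl (I.src e), .inr (I.src e), .inl (I.src g), .inr (I.src g)})
    (sW := {.inr (I.src e), .inl (I.dst e), .inr (I.src g)}) (by simp) (by simp [hge])
  rw [sum_insert (by simp [hk.symm]), sum_insert (by simp [hk.symm]), sum_pair (by simp),
    sum_insert (by simp [hk.symm]), sum_pair (by simp), vW,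
    redI_wVoteU_inr_eq_neg_one hN hNi hzi', redI_wVoteU_inl_eq_neg_one hpU hN hNk hzk,
    redI_wVoteW_inr_eq_neg_one hN hNk hzk] at h0
  linarith [wVoteU_le_one (I := I.redI) M N (.inl (I.src e)),
    wVoteU_le_one (I := I.redI) M N (.inr (I.src g)),
    wVoteW_le_one (I := I.redI) M N (.inr (I.src e))]

theorem WeaklyPopular.redI_free_of_blocks_toLeft (hpU : ∀ u e, 0 ≤ I.pU u e)
    (hM : I.redI.IsMatching M) (hpop : I.redI.WeaklyPopular M) (hb : I.Blocks M.toLeft e) :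
    I.mU M.toLeft (I.src e) = none ∧ I.mW M.toLeft (I.dst e) = none := by
  have hu : I.mU M.toLeft (I.src e) = none := by
    rcases hf : I.mU M.toLeft (I.src e) with _ | f
    · rfl
    exfalso
    rcases hg : I.mW M.toLeft (I.dst e) with _ | g
    · exact hpop.redI_not_blocks_of_mW_toLeft_eq_none_or_same hM hb hf (.inl hg)
    obtain rfl | hgf := eq_or_ne g f
    · exact hpop.redI_not_blocks_of_mW_toLeft_eq_none_or_same hM hb hf (.inr hg)
    · exact hpop.redI_not_blocks_of_mW_toLeft_eq_some_ne hpU hM hb hf hg hgf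
  refine ⟨hu, ?_⟩
  rcases hg : I.mW M.toLeft (I.dst e) with _ | g
  · rfl
  · exact (hpop.redI_not_blocks_of_mU_toLeft_eq_none hpU hM hb hu hg).elim

end Reduction

end PrefInst

open PrefInst in
theorem redI_weakly_popular_gives_stable_general
    {E : Type} [DecidableEq E] [Fintype E] {n : ℕ}
    (I : PrefInst (Fin n) (Fin n) E)
    (hpU : ∀ u e, 0 ≤ I.pU u e) (hpW : ∀ w e, 0 ≤ I.pW w e)
    (hstrictU : ∀ u e f, I.src e = u → I.src f = u → I.pU u e = I.pU u f → e = f)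
    (l : ℕ)
    (M' : Finset (E ⊕ Fin n ⊕ Fin n))
    (hM' : I.redI.IsMatching M')
    (hpop : I.redI.WeaklyPopular M')
    (hcard : M'.card = 2 * n - l) :
    ∃ M : Finset E, I.IsMatching M ∧ I.WeaklyStable M ∧ n - l ≤ M.card := by
  obtain ⟨M, hsub, hM, hstable⟩ := I.exists_weaklyStable_superset hstrictU hpU hpW
    hM'.toLeft_of_redI fun e he => hpop.redI_free_of_blocks_toLeft hpU hM' he
  have hsplit := card_toLeft_add_card_toRight (u := M')
  have hright := card_toRight_le_of_redI hM'
  have hleft := card_le_card hsub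
  exact ⟨M, hM, hstable, by omega⟩

open PrefInst in
/-- If `M'` is a weakly popular matching in the reduction instance
`I'` of size `2n − l` (where `l ≤ n`), then the original SMTI instance `I`
(ties on side `W` only, i.e. strict U-side preferences) admits a weakly stable
matching of size at least `n − l`. -/
theorem redI_weakly_popular_gives_stable
    {E : Type} [DecidableEq E] [Fintype E] {n : ℕ}
    (I : PrefInst (Fin n) (Fin n) E)
    (hpU : ∀ u e, 0 ≤ I.pU u e) (hpW : ∀ w e, 0 ≤ I.pW w e)
    (hstrictU : ∀ u e f, I.src e = u → I.src f = u → I.pU u e = I.pU u f → e = f)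
    (l : ℕ) (hl : l ≤ n)
    (M' : Finset (E ⊕ Fin n ⊕ Fin n))
    (hM' : I.redI.IsMatching M')
    (hpop : I.redI.WeaklyPopular M')
    (hcard : M'.card = 2 * n - l) :
    ∃ M : Finset E, I.IsMatching M ∧ I.WeaklyStable M ∧ n - l ≤ M.card :=
  redI_weakly_popular_gives_stable_general I hpU hpW hstrictU l M' hM' hpop hcard
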